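/- Let G be a finite group, K ≤ G, κ a linear character of K, and H a subgroup of the stabilizer G(κ). Then the map φ ↦ φ * κ, where (φ * κ)(στ) = φ(σ)κ(τ) for σ ∈ H, τ ∈ K, is a well-defined bijection from the set of irreducible characters of H lying over κ restricted to H ∩ K, onto the set of irreducible characters of HK lying over κ. The inverse bijection is restriction from HK to H. -/

import Mathlib

open scoped BigOperators Pointwise Classical

noncomputable section

variable {G : Type}

/-- Extension by zero to `G` of a function defined on a subgroup `H` of `G`. -/
def extZero [Group G] (H : Subgroup G) (φ : H → ℂ) (g : G) : ℂ :=
  if h : g ∈ H then φ ⟨g, h⟩ else 0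

/-- The character of `G` induced from the function `φ` on the subgroup `H`. -/
def indChar [Group G] [Fintype G] (H : Subgroup G) (φ : H → ℂ) : G → ℂ :=
  fun g => (Nat.card H : ℂ)⁻¹ * ∑ x : G, extZero H φ (x * g * x⁻¹)

/-- The character of an intermediate subgroup `K` induced from `φ` on `H ≤ K`,
viewed as a function on `G` supported on `K`. -/
def indCharTo [Group G] [Fintype G] (K H : Subgroup G) (φ : H → ℂ) : G → ℂ :=
  fun g => (Nat.card H : ℂ)⁻¹ * ∑ x : G, if x ∈ K then extZero H φ (x * g * x⁻¹) else 0

/-- The kernel of a character: the set where it takes the value `f 1`. -/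
def kerSet {X : Type*} [One X] (f : X → ℂ) : Set X := {x | f x = f 1}

/-- The center of a character: the set where `|f x| = f 1`. -/
def centSet {X : Type*} [One X] (f : X → ℂ) : Set X :=
  {x | (‖f x‖ : ℂ) = f 1}

/-- The central character associated with a character. -/
def zetaChar {X : Type*} [One X] (f : X → ℂ) : X → ℂ := fun x => f x / f 1

/-- `f` is a (nonzero) complex character of `X`. -/
def IsChar (X : Type) [Group X] (f : X → ℂ) : Prop :=
  (∃ V : FDRep ℂ X, FDRep.character V = f) ∧ f 1 ≠ 0

/-- `f` is an irreducible complex character of `X`. -/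
def IsIrrChar (X : Type) [Group X] (f : X → ℂ) : Prop :=
  ∃ V : FDRep ℂ X, CategoryTheory.Simple V ∧ FDRep.character V = f

/-- The inner product of two class functions on the subgroup `H` of `G`. -/
def innerSub [Group G] [Fintype G] (H : Subgroup G) (f φ : H → ℂ) : ℂ :=
  (Nat.card H : ℂ)⁻¹ * ∑ x : G, extZero H f x * (starRingEnd ℂ) (extZero H φ x)

/-- Restriction of a function on `K` to a smaller subgroup `L ≤ K`. -/
def resTo [Group G] {K : Subgroup G} (L : Subgroup G) (h : L ≤ K) (χ : K → ℂ) : L → ℂ :=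
  fun x => χ ⟨x, h x.2⟩

/-- `lam : G → ℂ` is (the extension of) a linear character of the subgroup `L`. -/
def IsLinOn [Group G] (L : Subgroup G) (lam : G → ℂ) : Prop :=
  lam 1 = 1 ∧ ∀ a ∈ L, ∀ b ∈ L, lam (a * b) = lam a * lam b

/-- The stabilizer in `G` of the character `φ` of the subgroup `H`. -/
def stabSet [Group G] (H : Subgroup G) (φ : H → ℂ) : Set G :=
  {g : G | (∀ x : G, x ∈ H ↔ g⁻¹ * x * g ∈ H) ∧
    ∀ x : G, extZero H φ (g⁻¹ * x * g) = extZero H φ x}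

/-- The stabilizer in `G` of a linear character `lam` of a normal subgroup `L`,
as a subgroup of `G`. -/
def linStab [Group G] (L : Subgroup G) (hL : L.Normal) (lam : G → ℂ) : Subgroup G where
  carrier := {g : G | ∀ x ∈ L, lam (g⁻¹ * x * g) = lam x}
  one_mem' := by intro x hx; simp
  mul_mem' := by
    intro a b ha hb x hx
    have h1 : a⁻¹ * x * a ∈ L := by simpa using hL.conj_mem x hx a⁻¹
    have key : (a * b)⁻¹ * x * (a * b) = b⁻¹ * (a⁻¹ * x * a) * b := by group
    rw [key, hb _ h1, ha _ hx]
  inv_mem' := by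
    intro a ha x hx
    have h1 : a * x * a⁻¹ ∈ L := hL.conj_mem x hx a
    have h2 := ha _ h1
    rw [show a⁻¹ * (a * x * a⁻¹) * a = x from by group] at h2
    rw [show a⁻¹⁻¹ * x * a⁻¹ = a * x * a⁻¹ from by group]
    exact h2.symm

/-!
If an irreducible representation `ρ` of a group `A` lies over a linear character `κ` of a
subgroup `B` that `A` normalizes and leaves `κ` invariant, then `B` acts through the scalars `κ`:
`∑_b conj κ(b) ρ(b)` commutes with `A`, so by Schur it is a scalar, nonzero because its trace is
`|B|` times the multiplicity of `κ`, and `ρ(b)` multiplies it by `κ(b)`.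

Applied to `H ∩ K ≤ H`, this lets an irreducible representation `ρ` of `H` over `κ` extend to
`HK = H ⊔ K` by `στ ↦ κ(τ) ρ(σ)`; applied to `K ≤ HK`, it shows that every irreducible
representation of `HK` over `κ` is of this form on its restriction to `H`. In both directions the
two groups act by scalar multiples of the same operators, so they have the same commutant and
irreducibility passes from one to the other; since `HK = H * K`, the formula
`χ(στ) = φ(σ) κ(τ)` determines the extension.
-/

open CategoryTheory Module

namespace IsLinOn

variable [Group G] {L : Subgroup G} {κ : G → ℂ}

theorem mono (hκ : IsLinOn L κ) {M : Subgroup G} (hML : M ≤ L) : IsLinOn M κ :=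
  ⟨hκ.1, fun a ha b hb => hκ.2 a (hML ha) b (hML hb)⟩

def toMonoidHom (hκ : IsLinOn L κ) : L →* ℂ where
  toFun b := κ b
  map_one' := hκ.1
  map_mul' a b := hκ.2 a a.2 b b.2

theorem ne_zero (hκ : IsLinOn L κ) {b : G} (hb : b ∈ L) : κ b ≠ 0 :=
  ((Group.isUnit (⟨b, hb⟩ : L)).map hκ.toMonoidHom).ne_zero

theorem map_inv (hκ : IsLinOn L κ) {b : G} (hb : b ∈ L) : κ b⁻¹ = (κ b)⁻¹ :=
  _root_.map_inv hκ.toMonoidHom ⟨b, hb⟩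

theorem map_inv_mul_mul (hκ : IsLinOn L κ) {a b : G} (ha : a ∈ L) (hb : b ∈ L) :
    κ (a⁻¹ * b * a) = κ b := by
  rw [hκ.2 _ (mul_mem (inv_mem ha) hb) _ ha, hκ.2 _ (inv_mem ha) _ hb, hκ.map_inv ha]
  field_simp [hκ.ne_zero ha]

theorem norm_eq_one [Finite G] (hκ : IsLinOn L κ) {b : G} (hb : b ∈ L) : ‖κ b‖ = 1 := by
  have : hκ.toMonoidHom ⟨b, hb⟩ ^ orderOf (⟨b, hb⟩ : L) = 1 := by
    rw [← map_pow, pow_orderOf_eq_one, map_one]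
  exact Complex.norm_eq_one_of_pow_eq_one this (orderOf_pos _).ne'

theorem conj_eq_map_inv [Finite G] (hκ : IsLinOn L κ) {b : G} (hb : b ∈ L) :
    starRingEnd ℂ (κ b) = κ b⁻¹ := by
  rw [← Complex.inv_eq_conj (hκ.norm_eq_one hb), hκ.map_inv hb]

end IsLinOn

section InnerSub

variable [Group G] [Fintype G]

theorem innerSub_eq_sum (L : Subgroup G) (f φ : L → ℂ) :
    innerSub L f φ = (Nat.card L : ℂ)⁻¹ * ∑ b : L, f b * starRingEnd ℂ (φ b) := by
  rw [innerSub, ← Fintype.sum_subtype_add_sum_subtype (· ∈ L),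
    Fintype.sum_eq_zero (fun x : {x // x ∉ L} => _) fun x => by simp [extZero, x.2]]
  simp [extZero]

theorem innerSub_eq_of_forall_eq_mul {L : Subgroup G} {κ : G → ℂ} (hκ : IsLinOn L κ)
    {f : L → ℂ} (d : ℂ) (hf : ∀ b : L, f b = d * κ b) :
    innerSub L f (fun b => κ b) = d := by
  have hterm : ∀ b : L, f b * starRingEnd ℂ (κ b) = d := fun b => by
    rw [hf, hκ.conj_eq_map_inv b.2, hκ.map_inv b.2]
    field_simp [hκ.ne_zero b.2]
  simp only [innerSub_eq_sum, hterm, Finset.sum_const, Finset.card_univ, nsmul_eq_mul,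
    Nat.card_eq_fintype_card]
  field_simp

end InnerSub

namespace FDRep

section Schur

variable {X : Type} [Group X]

theorem nontrivial_of_simple (V : FDRep ℂ X) [Simple V] : Nontrivial V := by
  by_contra h
  rw [not_nontrivial_iff_subsingleton] at h
  exact id_nonzero V (Action.Hom.ext (by ext v; exact Subsingleton.elim _ _))

theorem finrank_ne_zero_of_simple (V : FDRep ℂ X) [Simple V] : finrank ℂ V ≠ 0 :=
  have := V.nontrivial_of_simple
  finrank_pos.ne'

theorem exists_eq_smul_id_of_commute (V : FDRep ℂ X) [Simple V] (f : Module.End ℂ V)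
    (hf : ∀ x, Commute f (V.ρ x)) : ∃ c : ℂ, f = c • 1 := by
  let F : V ⟶ V := ⟨ObjectProperty.homMk (ModuleCat.ofHom f), fun x => by
    ext v; exact LinearMap.congr_fun (hf x) v⟩
  obtain ⟨c, hc⟩ := endomorphism_simple_eq_smul_id ℂ F
  exact ⟨c, LinearMap.ext fun v => (congr($(hc).hom.hom.hom v)).symm⟩

theorem simple_of_forall_exists_rho_eq_smul {Y : Type} [Group Y] [Finite Y] (V : FDRep ℂ X)
    [Simple V] (ρ : Representation ℂ Y V) (h : ∀ x, ∃ c : ℂ, ∃ y, V.ρ x = c • ρ y) :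
    Simple (FDRep.of ρ) := by
  have := V.nontrivial_of_simple
  have hid : 𝟙 (FDRep.of ρ) ≠ 0 := fun h0 => by
    obtain ⟨v, hv⟩ := exists_ne (0 : V)
    exact hv congr($(h0).hom.hom.hom v)
  rw [simple_iff_end_is_rank_one, finrank_eq_one_iff_of_nonzero' _ hid]
  intro f
  have hf : ∀ y, Commute f.hom.hom.hom (ρ y) := fun y => LinearMap.ext fun v =>
    congr($(f.comm y).hom.hom v)
  obtain ⟨c, hc⟩ := V.exists_eq_smul_id_of_commute f.hom.hom.hom fun x => by
    obtain ⟨a, y, hxy⟩ := h x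
    rw [hxy]
    exact (hf y).smul_right a
  exact ⟨c, Action.Hom.ext (by ext v; exact congr($(hc) v).symm)⟩

end Schur

variable [Group G] [Fintype G] {A B : Subgroup G} (V : FDRep ℂ A) (hBA : B ≤ A) (κ : G → ℂ)

/-- `|B|` times the projection of `V` onto its `κ`-isotypic part as a `B`-representation. -/
def isotypicSum : Module.End ℂ V :=
  ∑ b : B, starRingEnd ℂ (κ b) • V.ρ ⟨b, hBA b.2⟩

variable {κ}

theorem commute_isotypicSum (hAB : A ≤ Subgroup.normalizer B)
    (hinv : ∀ a ∈ A, ∀ b ∈ B, κ (a⁻¹ * b * a) = κ b) (a : A) :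
    Commute (V.isotypicSum hBA κ) (V.ρ a) := by
  let e : Equiv.Perm B := MulAction.toPerm (⟨a, hAB a.2⟩ : Subgroup.normalizer (B : Set G))
  have he : ∀ b : B, (e b : G) = a * b * (a : G)⁻¹ := fun b => rfl
  unfold Commute SemiconjBy isotypicSum
  rw [Finset.sum_mul, Finset.mul_sum, ← Equiv.sum_comp e]
  refine Finset.sum_congr rfl fun b _ => ?_
  have hκe : κ (e b) = κ b := by simpa [he] using hinv _ (inv_mem a.2) b b.2
  rw [smul_mul_assoc, mul_smul_comm, hκe, ← map_mul, ← map_mul]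
  congr 2
  ext
  simp [he]

theorem rho_mul_isotypicSum (hκ : IsLinOn B κ) {b : G} (hb : b ∈ B) :
    V.ρ ⟨b, hBA hb⟩ * V.isotypicSum hBA κ = κ b • V.isotypicSum hBA κ := by
  unfold isotypicSum
  rw [Finset.mul_sum, Finset.smul_sum, ← Equiv.sum_comp (Equiv.mulLeft (⟨b, hb⟩ : B)⁻¹)]
  refine Finset.sum_congr rfl fun c _ => ?_
  have hκc : starRingEnd ℂ (κ (b⁻¹ * c)) = κ b * starRingEnd ℂ (κ c) := by
    rw [hκ.conj_eq_map_inv (mul_mem (inv_mem hb) c.2), hκ.conj_eq_map_inv c.2, mul_inv_rev,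
      inv_inv, hκ.2 _ (inv_mem c.2) _ hb, mul_comm]
  simp only [Equiv.coe_mulLeft, Subgroup.coe_mul, Subgroup.coe_inv, mul_smul_comm, hκc,
    mul_smul, ← map_mul]
  congr 3
  ext
  simp

theorem trace_isotypicSum :
    LinearMap.trace ℂ V (V.isotypicSum hBA κ)
      = Nat.card B * innerSub B (resTo B hBA V.character) (fun b => κ b) := by
  rw [innerSub_eq_sum, ← mul_assoc, mul_inv_cancel₀ (by simp), one_mul, isotypicSum, map_sum]
  refine Finset.sum_congr rfl fun b _ => ?_
  rw [map_smul, smul_eq_mul, mul_comm]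
  rfl

theorem rho_eq_smul_of_innerSub_ne_zero [Simple V] (hAB : A ≤ Subgroup.normalizer B)
    (hκ : IsLinOn B κ) (hinv : ∀ a ∈ A, ∀ b ∈ B, κ (a⁻¹ * b * a) = κ b)
    (hV : innerSub B (resTo B hBA V.character) (fun b => κ b) ≠ 0) {b : G} (hb : b ∈ B) :
    V.ρ ⟨b, hBA hb⟩ = κ b • 1 := by
  obtain ⟨c, hc⟩ := V.exists_eq_smul_id_of_commute _ (V.commute_isotypicSum hBA hAB hinv)
  have hc0 : c ≠ 0 := by
    rintro rfl
    have htr := V.trace_isotypicSum hBA (κ := κ)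
    rw [hc, zero_smul, map_zero, eq_comm, mul_eq_zero] at htr
    exact htr.elim (by simp) hV
  have h := V.rho_mul_isotypicSum hBA hκ hb
  rw [hc, mul_smul_comm, mul_one, smul_comm] at h
  exact smul_right_injective _ hc0 h

theorem innerSub_resTo_character_eq_finrank (hκ : IsLinOn B κ)
    (hV : ∀ b (hb : b ∈ B), V.ρ ⟨b, hBA hb⟩ = κ b • 1) :
    innerSub B (resTo B hBA V.character) (fun b => κ b) = finrank ℂ V :=
  innerSub_eq_of_forall_eq_mul hκ _ fun b => by
    rw [mul_comm, resTo, character, hV b b.2, map_smul, LinearMap.trace_one, smul_eq_mul]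

end FDRep

namespace Subgroup

variable [Group G] {K H : Subgroup G}

theorem exists_mul_eq_of_mem_sup (hHK : H ≤ normalizer K) {g : G} (hg : g ∈ H ⊔ K) :
    ∃ σ : H, ∃ τ : K, (σ : G) * τ = g := by
  rw [← SetLike.mem_coe, coe_mul_of_left_le_normalizer_right H K hHK] at hg
  obtain ⟨σ, hσ, τ, hτ, rfl⟩ := hg
  exact ⟨⟨σ, hσ⟩, ⟨τ, hτ⟩, rfl⟩

theorem funext_of_extZero_mul_eq (hHK : H ≤ normalizer K) {χ χ' : ↥(H ⊔ K) → ℂ}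
    (h : ∀ σ ∈ H, ∀ τ ∈ K, extZero (H ⊔ K) χ (σ * τ) = extZero (H ⊔ K) χ' (σ * τ)) :
    χ = χ' := by
  funext g
  obtain ⟨σ, τ, hg⟩ := exists_mul_eq_of_mem_sup hHK g.2
  simpa [extZero, hg] using h σ σ.2 τ τ.2

end Subgroup

theorem IsLinOn.map_inv_mul_mul_of_mem_sup [Group G] {K H : Subgroup G} {κ : G → ℂ}
    (hκ : IsLinOn K κ) (hHK : H ≤ Subgroup.normalizer K)
    (hinv : ∀ h ∈ H, ∀ x ∈ K, κ (h⁻¹ * x * h) = κ x) {g : G} (hg : g ∈ H ⊔ K) {x : G}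
    (hx : x ∈ K) : κ (g⁻¹ * x * g) = κ x := by
  obtain ⟨σ, τ, rfl⟩ := Subgroup.exists_mul_eq_of_mem_sup hHK hg
  have hσx : (σ : G)⁻¹ * x * σ ∈ K := (Subgroup.mem_normalizer_iff''.mp (hHK σ.2) x).mp hx
  rw [show ((σ : G) * τ)⁻¹ * x * (σ * τ) = (τ : G)⁻¹ * ((σ : G)⁻¹ * x * σ) * τ by group,
    hκ.map_inv_mul_mul τ.2 hσx, hinv σ σ.2 x hx]

section Extension

variable [Group G] {K H : Subgroup G} {κ : G → ℂ} {V : Type*} [AddCommGroup V] [Module ℂ V]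
  {ρ : Representation ℂ H V}

theorem smul_rho_eq_of_mul_eq (hκ : IsLinOn K κ)
    (hρ : ∀ u (hu : u ∈ H ⊓ K), ρ ⟨u, hu.1⟩ = κ u • 1) {σ σ' : H} {τ τ' : K}
    (h : (σ : G) * τ = σ' * τ') : κ τ • ρ σ = κ τ' • ρ σ' := by
  set u : G := (σ : G)⁻¹ * σ'
  have huτ : u = τ * (τ' : G)⁻¹ := by
    simp only [u, inv_mul_eq_iff_eq_mul, ← mul_assoc, h, mul_inv_cancel_right]
  have hu : u ∈ H ⊓ K :=
    Subgroup.mem_inf.mpr ⟨mul_mem (inv_mem σ.2) σ'.2, huτ ▸ mul_mem τ.2 (inv_mem τ'.2)⟩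
  have hσ' : σ' = σ * ⟨u, hu.1⟩ := by ext; simp [u]
  have hτ : (τ : G) = u * τ' := by simp [huτ]
  rw [hσ', map_mul, hρ u hu, mul_smul_comm, mul_one, smul_smul, hτ, hκ.2 _ hu.2 _ τ'.2,
    mul_comm]

variable (hHK : H ≤ Subgroup.normalizer K)

def extendFun (κ : G → ℂ) (ρ : Representation ℂ H V) (g : ↥(H ⊔ K)) : Module.End ℂ V :=
  have hg := Subgroup.exists_mul_eq_of_mem_sup hHK g.2
  κ hg.choose_spec.choose • ρ hg.choose

theorem extendFun_eq (hκ : IsLinOn K κ) (hρ : ∀ u (hu : u ∈ H ⊓ K), ρ ⟨u, hu.1⟩ = κ u • 1)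
    {g : ↥(H ⊔ K)} (σ : H) (τ : K) (h : (σ : G) * τ = g) :
    extendFun hHK κ ρ g = κ τ • ρ σ :=
  have hg := Subgroup.exists_mul_eq_of_mem_sup hHK g.2
  smul_rho_eq_of_mul_eq hκ hρ (hg.choose_spec.choose_spec.trans h.symm)

def extendRep (hκ : IsLinOn K κ) (hinv : ∀ h ∈ H, ∀ x ∈ K, κ (h⁻¹ * x * h) = κ x)
    (ρ : Representation ℂ H V) (hρ : ∀ u (hu : u ∈ H ⊓ K), ρ ⟨u, hu.1⟩ = κ u • 1) :
    Representation ℂ ↥(H ⊔ K) V where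
  toFun := extendFun hHK κ ρ
  map_one' := by rw [extendFun_eq hHK hκ hρ 1 1 (mul_one 1), OneMemClass.coe_one, hκ.1,
    one_smul, map_one]
  map_mul' g₁ g₂ := by
    obtain ⟨σ₁, τ₁, h₁⟩ := Subgroup.exists_mul_eq_of_mem_sup hHK g₁.2
    obtain ⟨σ₂, τ₂, h₂⟩ := Subgroup.exists_mul_eq_of_mem_sup hHK g₂.2
    have hτ₁ : (σ₂ : G)⁻¹ * τ₁ * σ₂ ∈ K :=
      (Subgroup.mem_normalizer_iff''.mp (hHK σ₂.2) τ₁).mp τ₁.2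
    rw [extendFun_eq hHK hκ hρ σ₁ τ₁ h₁, extendFun_eq hHK hκ hρ σ₂ τ₂ h₂,
      extendFun_eq hHK hκ hρ (σ₁ * σ₂) (⟨_, hτ₁⟩ * τ₂) (by simp [← h₁, ← h₂, mul_assoc]),
      map_mul, smul_mul_smul_comm, Subgroup.coe_mul, hκ.2 _ hτ₁ _ τ₂.2, hinv _ σ₂.2 _ τ₁.2]

theorem extendRep_apply (hκ : IsLinOn K κ) (hinv : ∀ h ∈ H, ∀ x ∈ K, κ (h⁻¹ * x * h) = κ x)
    (hρ : ∀ u (hu : u ∈ H ⊓ K), ρ ⟨u, hu.1⟩ = κ u • 1) {g : ↥(H ⊔ K)} (σ : H) (τ : K)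
    (h : (σ : G) * τ = g) : extendRep hHK hκ hinv ρ hρ g = κ τ • ρ σ :=
  extendFun_eq hHK hκ hρ σ τ h

end Extension

theorem extZero_sup_mul_eq [Group G] {K H : Subgroup G} {κ : G → ℂ} {χ : ↥(H ⊔ K) → ℂ}
    {φ : H → ℂ} (hχ : ∀ (σ : H) (τ : K) (g : ↥(H ⊔ K)), (σ : G) * τ = g → χ g = φ σ * κ τ)
    {σ τ : G} (hσ : σ ∈ H) (hτ : τ ∈ K) :
    extZero (H ⊔ K) χ (σ * τ) = extZero H φ σ * κ τ := by
  have hm : σ * τ ∈ H ⊔ K := mul_mem (Subgroup.mem_sup_left hσ) (Subgroup.mem_sup_right hτ)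
  simp only [extZero, dif_pos hm, dif_pos hσ]
  exact hχ ⟨σ, hσ⟩ ⟨τ, hτ⟩ ⟨σ * τ, hm⟩ rfl

section Correspondence

variable [Group G] [Fintype G] {K H : Subgroup G} {κ : G → ℂ}

theorem existsUnique_irrChar_sup_of_innerSub_ne_zero (hκ : IsLinOn K κ)
    (hHK : H ≤ Subgroup.normalizer K) (hinv : ∀ h ∈ H, ∀ x ∈ K, κ (h⁻¹ * x * h) = κ x)
    {φ : H → ℂ} (hφ : IsIrrChar H φ)
    (hφκ : innerSub (H ⊓ K) (resTo (H ⊓ K) inf_le_left φ) (fun x => κ x) ≠ 0) :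
    ∃! χ : ↥(H ⊔ K) → ℂ, IsIrrChar ↥(H ⊔ K) χ ∧
      innerSub K (resTo K le_sup_right χ) (fun x => κ x) ≠ 0 ∧
      ∀ σ ∈ H, ∀ τ ∈ K, extZero (H ⊔ K) χ (σ * τ) = extZero H φ σ * κ τ := by
  obtain ⟨V, hV, rfl⟩ := hφ
  have hρ : ∀ u (hu : u ∈ H ⊓ K), V.ρ ⟨u, hu.1⟩ = κ u • 1 := fun u hu =>
    V.rho_eq_smul_of_innerSub_ne_zero inf_le_left
      ((le_inf Subgroup.le_normalizer hHK).trans Subgroup.inf_normalizer_le_normalizer_inf)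
      (hκ.mono inf_le_right) (fun a ha b hb => hinv a ha b (Subgroup.mem_inf.mp hb).2) hφκ hu
  let W := FDRep.of (extendRep hHK hκ hinv V.ρ hρ)
  have hWρ : ∀ (σ : H) (τ : K) (g : ↥(H ⊔ K)), (σ : G) * τ = g → W.ρ g = κ τ • V.ρ σ :=
    fun σ τ _ h => extendRep_apply hHK hκ hinv hρ σ τ h
  have hWχ : ∀ (σ : H) (τ : K) (g : ↥(H ⊔ K)), (σ : G) * τ = g →
      W.character g = V.character σ * κ τ := fun σ τ g h => by
    rw [FDRep.character, hWρ σ τ g h, map_smul, smul_eq_mul, mul_comm]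
    rfl
  have hW : Simple W := V.simple_of_forall_exists_rho_eq_smul _ fun σ =>
    ⟨1, ⟨σ, Subgroup.mem_sup_left σ.2⟩, by
      rw [extendRep_apply hHK hκ hinv hρ σ 1 (mul_one _), OneMemClass.coe_one, hκ.1, one_smul,
        one_smul]⟩
  refine ⟨W.character, ⟨⟨W, hW, rfl⟩, ?_, fun σ hσ τ hτ => extZero_sup_mul_eq hWχ hσ hτ⟩,
    fun χ hχ => Subgroup.funext_of_extZero_mul_eq hHK fun σ hσ τ hτ => ?_⟩
  · rw [W.innerSub_resTo_character_eq_finrank le_sup_right hκ fun τ hτ => by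
      rw [hWρ 1 ⟨τ, hτ⟩ _ (one_mul _), map_one]]
    exact_mod_cast W.finrank_ne_zero_of_simple
  · rw [hχ.2.2 σ hσ τ hτ, extZero_sup_mul_eq hWχ hσ hτ]

theorem isIrrChar_resTo_of_innerSub_ne_zero (hκ : IsLinOn K κ)
    (hHK : H ≤ Subgroup.normalizer K) (hinv : ∀ h ∈ H, ∀ x ∈ K, κ (h⁻¹ * x * h) = κ x)
    {χ : ↥(H ⊔ K) → ℂ} (hχ : IsIrrChar ↥(H ⊔ K) χ)
    (hχκ : innerSub K (resTo K le_sup_right χ) (fun x => κ x) ≠ 0) :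
    IsIrrChar H (resTo H le_sup_left χ) ∧
      innerSub (H ⊓ K) (resTo (H ⊓ K) inf_le_left (resTo H le_sup_left χ)) (fun x => κ x) ≠ 0 ∧
      ∀ σ ∈ H, ∀ τ ∈ K,
        extZero (H ⊔ K) χ (σ * τ) = extZero H (resTo H le_sup_left χ) σ * κ τ := by
  obtain ⟨V, hV, rfl⟩ := hχ
  have hρ : ∀ τ (hτ : τ ∈ K), V.ρ ⟨τ, Subgroup.mem_sup_right hτ⟩ = κ τ • 1 := fun τ hτ =>
    V.rho_eq_smul_of_innerSub_ne_zero le_sup_right (sup_le hHK Subgroup.le_normalizer) hκ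
      (fun _ hg _ hx => hκ.map_inv_mul_mul_of_mem_sup hHK hinv hg hx) hχκ hτ
  let U := FDRep.of (V.ρ.comp (Subgroup.inclusion (le_sup_left : H ≤ H ⊔ K)))
  have hVρ : ∀ (σ : H) (τ : K) (g : ↥(H ⊔ K)), (σ : G) * τ = g → V.ρ g = κ τ • U.ρ σ := by
    intro σ τ g h
    obtain rfl : g = ⟨σ, Subgroup.mem_sup_left σ.2⟩ * ⟨τ, Subgroup.mem_sup_right τ.2⟩ :=
      Subtype.ext h.symm
    rw [map_mul, hρ τ τ.2, mul_smul_comm, mul_one]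
    rfl
  have hU : Simple U := V.simple_of_forall_exists_rho_eq_smul _ fun g => by
    obtain ⟨σ, τ, h⟩ := Subgroup.exists_mul_eq_of_mem_sup hHK g.2
    exact ⟨κ τ, σ, hVρ σ τ g h⟩
  have hVχ : ∀ (σ : H) (τ : K) (g : ↥(H ⊔ K)), (σ : G) * τ = g →
      V.character g = U.character σ * κ τ := fun σ τ g h => by
    rw [FDRep.character, hVρ σ τ g h, map_smul, smul_eq_mul, mul_comm]
    rfl
  refine ⟨⟨U, hU, rfl⟩, ?_, fun σ hσ τ hτ => extZero_sup_mul_eq hVχ hσ hτ⟩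
  rw [show resTo (H ⊓ K) inf_le_left (resTo H le_sup_left V.character) =
      resTo (H ⊓ K) inf_le_left U.character from rfl,
    U.innerSub_resTo_character_eq_finrank inf_le_left (hκ.mono inf_le_right) fun u hu =>
      hρ u (Subgroup.mem_inf.mp hu).2]
  exact_mod_cast U.finrank_ne_zero_of_simple

end Correspondence

theorem stmt_4 [Group G] [Fintype G] (K H : Subgroup G) (κ : G → ℂ) (hκ : IsLinOn K κ)
    (hHstab : ∀ h ∈ H, (∀ x : G, x ∈ K ↔ h⁻¹ * x * h ∈ K) ∧
      ∀ x ∈ K, κ (h⁻¹ * x * h) = κ x) :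
    (∀ φ : ↥H → ℂ, IsIrrChar ↥H φ →
      innerSub (H ⊓ K) (resTo (H ⊓ K) inf_le_left φ) (fun x : ↥(H ⊓ K) => κ ↑x) ≠ 0 →
      ∃! χ : ↥(H ⊔ K) → ℂ, IsIrrChar ↥(H ⊔ K) χ ∧
        innerSub K (resTo K le_sup_right χ) (fun x : ↥K => κ ↑x) ≠ 0 ∧
        ∀ σ ∈ H, ∀ τ ∈ K, extZero (H ⊔ K) χ (σ * τ) = extZero H φ σ * κ τ) ∧
    (∀ χ : ↥(H ⊔ K) → ℂ, IsIrrChar ↥(H ⊔ K) χ →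
      innerSub K (resTo K le_sup_right χ) (fun x : ↥K => κ ↑x) ≠ 0 →
      IsIrrChar ↥H (resTo H le_sup_left χ) ∧
      innerSub (H ⊓ K) (resTo (H ⊓ K) inf_le_left (resTo H le_sup_left χ))
        (fun x : ↥(H ⊓ K) => κ ↑x) ≠ 0 ∧
      ∀ σ ∈ H, ∀ τ ∈ K,
        extZero (H ⊔ K) χ (σ * τ) = extZero H (resTo H le_sup_left χ) σ * κ τ) := by
  have hHK : H ≤ Subgroup.normalizer K := fun h hh =>
    Subgroup.mem_normalizer_iff''.mpr (hHstab h hh).1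
  have hinv : ∀ h ∈ H, ∀ x ∈ K, κ (h⁻¹ * x * h) = κ x := fun h hh => (hHstab h hh).2
  exact ⟨fun _ hφ hφκ => existsUnique_irrChar_sup_of_innerSub_ne_zero hκ hHK hinv hφ hφκ,
    fun _ hχ hχκ => isIrrChar_resTo_of_innerSub_ne_zero hκ hHK hinv hχ hχκ⟩
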